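/- arXiv:2202.06978 — 4 statements merged into one kernel-verified Lean document; each statement's English description precedes it below -/
import Mathlib

section
/- Let K ≥ 1 and n ≥ 1, let α : Fin K → ℂ with α_j ≠ 0 for all j, let ‖α‖₁ = Σ_j |α_j|, let U : Fin K → Matrix (Fin n) (Fin n) ℂ, and let A = Σ_j α_j • U_j. Let V : Matrix (Fin K) (Fin K) ℂ be any matrix whose 0-th column satisfies V_{j,0} = √(|α_j|) / √(‖α‖₁) for all j, and let O : Matrix (Fin K × Fin n) (Fin K × Fin n) ℂ be the block-diagonal matrix O = Σ_j (stdBasisMatrix j j 1) ⊗ₖ ((α_j/|α_j|) • U_j), where ⊗ₖ denotes the Kronecker product. Then for every ψ : Fin n → ℂ and every i ∈ Fin n, the (0,i)-component of ((Vᴴ ⊗ₖ 1) * O * (V ⊗ₖ 1)).mulVec e₀⊗ψ equals (1/‖α‖₁) · (A.mulVec ψ)_i, where e₀⊗ψ is the vector (j,i) ↦ if j = 0 then ψ_i else 0. That is, ⟨0|(V† ⊗ I) O (V ⊗ I)|0⟩|ψ⟩ = A|ψ⟩/‖α‖₁. -/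
open Matrix Kronecker

/-- The LCU circuit identity: `⟨0|(V† ⊗ I) O (V ⊗ I)|0⟩|ψ⟩ = A|ψ⟩/‖α‖₁` where
`A = Σ_j α_j U_j`, `V` prepares `(1/√‖α‖₁) Σ_j √|α_j| |j⟩`, and
`O = Σ_j |j⟩⟨j| ⊗ (α_j/|α_j|) U_j`. -/
theorem stmt_5 (K n : ℕ) (hK : 0 < K) (hn : 0 < n)
    (α : Fin K → ℂ) (hα : ∀ j, α j ≠ 0)
    (U : Fin K → Matrix (Fin n) (Fin n) ℂ)
    (V : Matrix (Fin K) (Fin K) ℂ)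
    (hV : ∀ j, V j ⟨0, hK⟩ =
      ((Real.sqrt (‖α j‖) / Real.sqrt (∑ k, ‖α k‖) : ℝ) : ℂ))
    (ψ : Fin n → ℂ) (i : Fin n) :
    ((Vᴴ ⊗ₖ (1 : Matrix (Fin n) (Fin n) ℂ)) *
          (∑ j, (Matrix.single j j (1 : ℂ)) ⊗ₖ
            ((α j / ((‖α j‖ : ℝ) : ℂ)) • U j)) *
          (V ⊗ₖ (1 : Matrix (Fin n) (Fin n) ℂ))).mulVec
        (fun p => if p.1 = ⟨0, hK⟩ then ψ p.2 else 0) ((⟨0, hK⟩ : Fin K), i) =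
      (1 / (((∑ k, ‖α k‖ : ℝ)) : ℂ)) * (∑ j, α j • U j).mulVec ψ i := by
  have hS : (0:ℝ) < ∑ k, ‖α k‖ := by
    have : Nonempty (Fin K) := ⟨⟨0, hK⟩⟩
    exact Finset.sum_pos (fun k _ => norm_pos_iff.mpr (hα k)) Finset.univ_nonempty
  simp only [Matrix.mulVec, Matrix.mul_apply, dotProduct, Fintype.sum_prod_type,
    kroneckerMap_apply, Matrix.sum_apply, Matrix.smul_apply, Matrix.one_apply,
    Matrix.conjTranspose_apply, Matrix.single_apply, Matrix.of_apply, hV]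
  simp only [ite_and, mul_ite, ite_mul, mul_zero, zero_mul, mul_one, one_mul,
    Finset.sum_ite_irrel, Finset.sum_ite_eq, Finset.sum_ite_eq', Finset.mem_univ, if_true,
    Finset.sum_const_zero]
  rw [Finset.mul_sum]
  refine Finset.sum_congr rfl fun x _ => ?_
  rw [mul_comm (1 / ((∑ k, ‖α k‖ : ℝ) : ℂ)), mul_assoc, mul_comm _ (ψ x),
    ← mul_assoc, mul_comm _ (ψ x), mul_assoc]
  congr 1
  rw [Finset.sum_mul]
  refine Finset.sum_congr rfl fun j _ => ?_
  rw [hV j]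
  have ha : (0:ℝ) < ‖α j‖ := norm_pos_iff.mpr (hα j)
  rw [smul_eq_mul, Complex.star_def, Complex.conj_ofReal]
  rw [show ((Real.sqrt (‖α j‖) / Real.sqrt (∑ k, ‖α k‖) : ℝ) : ℂ) *
      ((α j / ((‖α j‖ : ℝ) : ℂ)) * U j i x) *
      ((Real.sqrt (‖α j‖) / Real.sqrt (∑ k, ‖α k‖) : ℝ) : ℂ)
      = ((((Real.sqrt (‖α j‖))^2 / (Real.sqrt (∑ k, ‖α k‖))^2 : ℝ)) : ℂ) *
        ((α j / ((‖α j‖ : ℝ) : ℂ)) * U j i x) by push_cast; ring]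
  rw [Real.sq_sqrt ha.le, Real.sq_sqrt hS.le, smul_eq_mul]
  have h1 : ((‖α j‖ : ℝ) : ℂ) ≠ 0 := by exact_mod_cast ha.ne'
  have h2 : (((∑ k, ‖α k‖ : ℝ)) : ℂ) ≠ 0 := by exact_mod_cast hS.ne'
  push_cast
  field_simp
end

section
/- Let D ≥ 1, let a ≥ 0, Δ ≥ 0, and γ > 0. Let λ : Fin D → ℝ satisfy λ_0 = 0 and λ_j ≥ Δ for all j ≠ 0, and let μ : Fin D → ℂ satisfy Σ_j |μ_j|² = 1 and μ_0 = γ (a positive real). Define u ∈ EuclideanSpace ℂ (Fin D) by u_j = μ_j · e^{−a λ_j²}. Then ‖ e₀ − u/‖u‖ ‖ ≤ 2 e^{−a Δ²} / γ, where e₀ is the standard basis vector at index 0. -/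
/-- Distance between the ground state `e₀` and the normalized ideal Gaussian-boosted state:
if `λ_0 = 0`, `λ_j ≥ Δ` for `j ≠ 0`, `Σ |μ_j|² = 1` and `μ_0 = γ > 0`, and
`u_j = μ_j e^{−aλ_j²}`, then `‖e₀ − u/‖u‖‖ ≤ 2e^{−aΔ²}/γ`. -/
theorem stmt_15 (D : ℕ) (hD : 0 < D) (a Δ γ : ℝ) (ha : 0 ≤ a) (hΔ : 0 ≤ Δ) (hγ : 0 < γ)
    (lam : Fin D → ℝ) (hlam0 : lam ⟨0, hD⟩ = 0)
    (hgap : ∀ j, j ≠ (⟨0, hD⟩ : Fin D) → Δ ≤ lam j)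
    (μ : Fin D → ℂ) (hμ : ∑ j, ‖μ j‖ ^ 2 = 1) (hμ0 : μ ⟨0, hD⟩ = (γ : ℂ))
    (u : EuclideanSpace ℂ (Fin D))
    (hu : ∀ j, u j = μ j * (Real.exp (-a * lam j ^ 2) : ℝ)) :
    ‖EuclideanSpace.single (⟨0, hD⟩ : Fin D) (1 : ℂ) - ((‖u‖ : ℂ))⁻¹ • u‖ ≤
      2 * Real.exp (-a * Δ ^ 2) / γ := by
  set i0 : Fin D := ⟨0, hD⟩ with hi0
  set ε : ℝ := Real.exp (-a * Δ ^ 2) with hε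
  have hεpos : 0 < ε := Real.exp_pos _
  set e : EuclideanSpace ℂ (Fin D) := EuclideanSpace.single i0 (1 : ℂ) with he
  have hu0 : u i0 = (γ : ℂ) := by
    rw [hu, hμ0, hlam0]; norm_num
  have hexp : ∀ j, j ≠ i0 → Real.exp (-a * lam j ^ 2) ≤ ε := by
    intro j hj
    apply Real.exp_le_exp.2
    have h := hgap j hj
    have hsq : Δ ^ 2 ≤ lam j ^ 2 := by nlinarith
    nlinarith [mul_le_mul_of_nonneg_left hsq ha]
  set w : EuclideanSpace ℂ (Fin D) := u - (γ : ℂ) • e with hw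
  have hwj : ∀ j, ‖w j‖ ^ 2 ≤ ε ^ 2 * ‖μ j‖ ^ 2 := by
    intro j
    by_cases hj : j = i0
    · subst hj
      have h0 : w i0 = 0 := by
        simp [hw, he, hu0, EuclideanSpace.single_apply]
      have hpos : (0:ℝ) ≤ ε ^ 2 * ‖μ i0‖ ^ 2 := by positivity
      simpa [h0] using hpos
    · have h1 : w j = u j := by
        simp [hw, he, EuclideanSpace.single_apply, hj]
      rw [h1, hu]
      rw [norm_mul, mul_pow]
      have h2 : ‖((Real.exp (-a * lam j ^ 2) : ℝ) : ℂ)‖ = Real.exp (-a * lam j ^ 2) := by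
        rw [Complex.norm_real, Real.norm_eq_abs, abs_of_pos (Real.exp_pos _)]
      rw [h2]
      have h3 := hexp j hj
      nlinarith [sq_nonneg (‖μ j‖), Real.exp_pos (-a * lam j ^ 2),
        mul_le_mul h3 h3 (Real.exp_pos _).le hεpos.le]
  have hwnorm : ‖w‖ ≤ ε := by
    rw [EuclideanSpace.norm_eq]
    have : ∑ j, ‖w j‖ ^ 2 ≤ ε ^ 2 := by
      calc ∑ j, ‖w j‖ ^ 2 ≤ ∑ j, ε ^ 2 * ‖μ j‖ ^ 2 := Finset.sum_le_sum fun j _ => hwj j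
        _ = ε ^ 2 := by rw [← Finset.mul_sum, hμ, mul_one]
    calc Real.sqrt (∑ j, ‖w j‖ ^ 2) ≤ Real.sqrt (ε ^ 2) := Real.sqrt_le_sqrt this
      _ = ε := Real.sqrt_sq hεpos.le
  have hγu : γ ≤ ‖u‖ := by
    rw [EuclideanSpace.norm_eq]
    have h1 : γ ^ 2 ≤ ∑ j, ‖u j‖ ^ 2 := by
      have h2 := Finset.single_le_sum (f := fun j => ‖u j‖ ^ 2)
        (fun j _ => sq_nonneg _) (Finset.mem_univ i0)
      simp only [hu0, Complex.norm_real, Real.norm_eq_abs, abs_of_pos hγ] at h2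
      exact h2
    have := Real.sqrt_le_sqrt h1
    rwa [Real.sqrt_sq hγ.le] at this
  have hupos : (0 : ℝ) < ‖u‖ := lt_of_lt_of_le hγ hγu
  have huw : ‖u‖ ≤ γ + ‖w‖ := by
    have : u = (γ : ℂ) • e + w := by rw [hw]; abel
    calc ‖u‖ = ‖(γ : ℂ) • e + w‖ := by rw [← this]
      _ ≤ ‖(γ : ℂ) • e‖ + ‖w‖ := norm_add_le _ _
      _ = γ + ‖w‖ := by
          rw [norm_smul, he, EuclideanSpace.norm_single]
          simp [abs_of_pos hγ, Complex.norm_real]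
  have key : e - ((‖u‖ : ℂ))⁻¹ • u
      = ((1 : ℂ) - (γ : ℂ) / (‖u‖ : ℂ)) • e - ((‖u‖ : ℂ))⁻¹ • w := by
    rw [hw, div_eq_inv_mul]
    module
  have hcoef : ‖((1 : ℂ) - (γ : ℂ) / (‖u‖ : ℂ))‖ = 1 - γ / ‖u‖ := by
    have : ((1 : ℂ) - (γ : ℂ) / (‖u‖ : ℂ)) = ((1 - γ / ‖u‖ : ℝ) : ℂ) := by push_cast; ring
    rw [this, Complex.norm_real, Real.norm_eq_abs, abs_of_nonneg]
    have : γ / ‖u‖ ≤ 1 := (div_le_one hupos).2 hγu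
    linarith
  calc ‖EuclideanSpace.single i0 (1 : ℂ) - ((‖u‖ : ℂ))⁻¹ • u‖
      = ‖((1 : ℂ) - (γ : ℂ) / (‖u‖ : ℂ)) • e - ((‖u‖ : ℂ))⁻¹ • w‖ := by rw [← he, key]
    _ ≤ ‖((1 : ℂ) - (γ : ℂ) / (‖u‖ : ℂ)) • e‖ + ‖((‖u‖ : ℂ))⁻¹ • w‖ := norm_sub_le _ _
    _ = (1 - γ / ‖u‖) + ‖w‖ / ‖u‖ := by
        rw [norm_smul, norm_smul, hcoef, he, EuclideanSpace.norm_single]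
        have h4 : ‖((‖u‖ : ℂ))⁻¹‖ = ‖u‖⁻¹ := by
          rw [norm_inv, Complex.norm_real, Real.norm_eq_abs, abs_of_pos hupos]
        rw [h4]
        simp [div_eq_inv_mul, mul_comm]
    _ ≤ 2 * ε / γ := by
        have h1 : (1 - γ / ‖u‖) + ‖w‖ / ‖u‖ = (‖u‖ - γ + ‖w‖) / ‖u‖ := by
          field_simp
        rw [h1, div_le_div_iff₀ hupos hγ]
        nlinarith [norm_nonneg w]
end

section
/- Let D ≥ 1, let a ≥ 0, Δ ≥ 0, γ > 0, and ε_T ∈ [0, γ). Let λ : Fin D → ℝ satisfy λ_0 = 0 and λ_j ∈ [Δ, 1] for all j ≠ 0 (in particular λ_j ∈ [0,1] for all j), and let μ : Fin D → ℂ satisfy Σ_j |μ_j|² = 1 and μ_0 = γ (a positive real). Let g : ℝ → ℂ satisfy |e^{−a x²} − g(x)| ≤ ε_T for all x ∈ [0, 1], and define v ∈ EuclideanSpace ℂ (Fin D) by v_j = μ_j · g(λ_j). Then v ≠ 0 and ‖ e₀ − v/‖v‖ ‖ ≤ 2 e^{−a Δ²}/γ + 2 ε_T/γ, where e₀ is the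 standard basis vector at index 0. -/

lemma normalize_dist {F : Type*} [NormedAddCommGroup F] [NormedSpace ℝ F]
    (e v : F) (he : ‖e‖ = 1) (r : ℝ) (hr : 0 < r) (hv : v ≠ 0) :
    ‖e - ‖v‖⁻¹ • v‖ ≤ 2 * ‖v - r • e‖ / r := by
  have hn : 0 < ‖v‖ := norm_pos_iff.mpr hv
  have h1 : ‖e - r⁻¹ • v‖ = ‖v - r • e‖ / r := by
    have : e - r⁻¹ • v = r⁻¹ • (r • e - v) := by
      rw [smul_sub, smul_smul, inv_mul_cancel₀ hr.ne', one_smul]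
    rw [this, norm_smul, norm_sub_rev, Real.norm_eq_abs, abs_of_pos (by positivity)]
    ring
  have h2 : ‖r⁻¹ • v - ‖v‖⁻¹ • v‖ ≤ ‖v - r • e‖ / r := by
    rw [← sub_smul, norm_smul, Real.norm_eq_abs]
    have habs : |r⁻¹ - ‖v‖⁻¹| * ‖v‖ = |‖v‖ - r| / r := by
      rw [show r⁻¹ - ‖v‖⁻¹ = (‖v‖ - r) / (r * ‖v‖) by
        field_simp]
      rw [abs_div, abs_of_pos (mul_pos hr hn)]
      field_simp
    rw [habs]
    have hle : |‖v‖ - r| ≤ ‖v - r • e‖ := by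
      have := abs_norm_sub_norm_le v (r • e)
      rwa [norm_smul, Real.norm_eq_abs, abs_of_pos hr, he, mul_one] at this
    exact div_le_div_of_nonneg_right hle hr.le
  calc ‖e - ‖v‖⁻¹ • v‖ ≤ ‖e - r⁻¹ • v‖ + ‖r⁻¹ • v - ‖v‖⁻¹ • v‖ :=
        norm_sub_le_norm_sub_add_norm_sub _ _ _
    _ ≤ ‖v - r • e‖ / r + ‖v - r • e‖ / r := by rw [h1]; linarith
    _ = 2 * ‖v - r • e‖ / r := by ring

/-- Distance between the ground state `e₀` and the normalized truncated Gaussian-boosted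
state: if `g` approximates `e^{−ax²}` within `ε_T < γ` on `[0,1]`, `λ_0 = 0`,
`λ_j ∈ [Δ,1]` for `j ≠ 0`, `Σ |μ_j|² = 1`, `μ_0 = γ > 0`, and `v_j = μ_j g(λ_j)`,
then `v ≠ 0` and `‖e₀ − v/‖v‖‖ ≤ 2e^{−aΔ²}/γ + 2ε_T/γ`. -/
theorem stmt_16 (D : ℕ) (hD : 0 < D) (a Δ γ εT : ℝ)
    (ha : 0 ≤ a) (hΔ : 0 ≤ Δ) (hγ : 0 < γ) (hεT0 : 0 ≤ εT) (hεTγ : εT < γ)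
    (lam : Fin D → ℝ) (hlam0 : lam ⟨0, hD⟩ = 0)
    (hgap : ∀ j, j ≠ (⟨0, hD⟩ : Fin D) → lam j ∈ Set.Icc Δ 1)
    (μ : Fin D → ℂ) (hμ : ∑ j, ‖μ j‖ ^ 2 = 1) (hμ0 : μ ⟨0, hD⟩ = (γ : ℂ))
    (g : ℝ → ℂ)
    (hg : ∀ x ∈ Set.Icc (0:ℝ) 1, ‖((Real.exp (-a * x ^ 2) : ℝ) : ℂ) - g x‖ ≤ εT)
    (v : EuclideanSpace ℂ (Fin D))
    (hv : ∀ j, v j = μ j * g (lam j)) :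
    v ≠ 0 ∧
      ‖EuclideanSpace.single (⟨0, hD⟩ : Fin D) (1 : ℂ) - ((‖v‖ : ℂ))⁻¹ • v‖ ≤
        2 * Real.exp (-a * Δ ^ 2) / γ + 2 * εT / γ := by
  set i0 : Fin D := ⟨0, hD⟩
  set E : ℝ := Real.exp (-a * Δ ^ 2) with hE
  have hEpos : 0 < E := Real.exp_pos _
  -- γ ≤ 1
  have hγ1 : γ ≤ 1 := by
    have h0 : ‖μ i0‖ ^ 2 ≤ 1 := by
      rw [← hμ]
      exact Finset.single_le_sum (f := fun j => ‖μ j‖ ^ 2)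
        (fun j _ => by positivity) (Finset.mem_univ i0)
    rw [hμ0, Complex.norm_real, Real.norm_eq_abs, abs_of_pos hγ] at h0
    nlinarith [h0]
  have hεT1 : εT < 1 := lt_of_lt_of_le hεTγ hγ1
  -- g at 0
  have hg0 : ‖(1:ℂ) - g 0‖ ≤ εT := by
    have := hg 0 (by constructor <;> norm_num)
    simpa using this
  -- v i0
  have hvi0 : v i0 = (γ:ℂ) * g 0 := by rw [hv, hμ0, hlam0]
  have hg0ne : g 0 ≠ 0 := by
    intro h
    rw [h, sub_zero, norm_one] at hg0
    linarith
  have hvne : v ≠ 0 := by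
    intro h
    have : v i0 = 0 := by rw [h]; rfl
    rw [hvi0] at this
    exact hg0ne (by
      rcases mul_eq_zero.mp this with h' | h'
      · exact absurd h' (Complex.ofReal_ne_zero.mpr hγ.ne')
      · exact h')
  refine ⟨hvne, ?_⟩
  -- sum of tail
  have htail : ∑ j ∈ {i0}ᶜ, ‖μ j‖ ^ 2 = 1 - γ ^ 2 := by
    have := Fintype.sum_eq_add_sum_compl i0 (fun j => ‖μ j‖ ^ 2)
    rw [hμ0] at this
    have hnγ : ‖(γ:ℂ)‖ = γ := by
      rw [Complex.norm_real, Real.norm_eq_abs, abs_of_pos hγ]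
    rw [hnγ] at this
    linarith [hμ ▸ this]
  -- bound on ‖v - γ • e‖
  set e : EuclideanSpace ℂ (Fin D) := EuclideanSpace.single i0 (1:ℂ) with he
  have hnorm_e : ‖e‖ = 1 := by simp [he]
  have hkey : ‖v - γ • e‖ ≤ E + εT := by
    have hsq : ∑ j, ‖(v - γ • e) j‖ ^ 2 ≤ (E + εT) ^ 2 := by
      rw [Fintype.sum_eq_add_sum_compl i0]
      have h0 : ‖(v - γ • e) i0‖ ^ 2 ≤ γ ^ 2 * εT ^ 2 := by
        have : (v - γ • e) i0 = (γ:ℂ) * (g 0 - 1) := by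
          simp only [PiLp.sub_apply, PiLp.smul_apply, he, EuclideanSpace.single_apply,
            if_pos rfl, hvi0, Complex.real_smul, if_true]
          ring
        rw [this, norm_mul, Complex.norm_real, Real.norm_eq_abs, abs_of_pos hγ,
          norm_sub_rev]
        have hle : γ * ‖1 - g 0‖ ≤ γ * εT :=
          mul_le_mul_of_nonneg_left hg0 hγ.le
        calc (γ * ‖1 - g 0‖) ^ 2 ≤ (γ * εT) ^ 2 :=
              pow_le_pow_left₀ (by positivity) hle 2
          _ = γ ^ 2 * εT ^ 2 := by ring
      have h1 : ∑ j ∈ {i0}ᶜ, ‖(v - γ • e) j‖ ^ 2 ≤ (E + εT) ^ 2 * (1 - γ ^ 2) := by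
        rw [← htail, Finset.mul_sum]
        apply Finset.sum_le_sum
        intro j hj
        have hjne : j ≠ i0 := by simpa using hj
        have hlamj := hgap j hjne
        have hlam01 : lam j ∈ Set.Icc (0:ℝ) 1 := ⟨le_trans hΔ hlamj.1, hlamj.2⟩
        have hexp : Real.exp (-a * (lam j) ^ 2) ≤ E := by
          apply Real.exp_le_exp.mpr
          have : Δ ^ 2 ≤ (lam j) ^ 2 := by nlinarith [hlamj.1]
          nlinarith
        have hgb : ‖g (lam j)‖ ≤ E + εT := by
          have h2 := hg (lam j) hlam01
          have h3 : ‖g (lam j)‖ ≤ ‖((Real.exp (-a * (lam j) ^ 2) : ℝ) : ℂ)‖ + εT := by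
            calc ‖g (lam j)‖
                = ‖((Real.exp (-a * (lam j) ^ 2) : ℝ) : ℂ)
                    - (((Real.exp (-a * (lam j) ^ 2) : ℝ) : ℂ) - g (lam j))‖ := by
                  congr 1; ring
              _ ≤ ‖((Real.exp (-a * (lam j) ^ 2) : ℝ) : ℂ)‖
                    + ‖((Real.exp (-a * (lam j) ^ 2) : ℝ) : ℂ) - g (lam j)‖ :=
                  norm_sub_le _ _
              _ ≤ ‖((Real.exp (-a * (lam j) ^ 2) : ℝ) : ℂ)‖ + εT := by linarith
          rw [Complex.norm_real, Real.norm_eq_abs,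
            abs_of_pos (Real.exp_pos _)] at h3
          linarith
        have hvj : (v - γ • e) j = μ j * g (lam j) := by
          simp only [PiLp.sub_apply, PiLp.smul_apply, he, EuclideanSpace.single_apply,
            if_neg hjne, hv, smul_zero, sub_zero]
        rw [hvj, norm_mul]
        calc (‖μ j‖ * ‖g (lam j)‖) ^ 2 ≤ (‖μ j‖ * (E + εT)) ^ 2 :=
              pow_le_pow_left₀ (by positivity)
                (mul_le_mul_of_nonneg_left hgb (norm_nonneg (μ j))) 2
          _ = (E + εT) ^ 2 * ‖μ j‖ ^ 2 := by ring
      calc ‖(v - γ • e) i0‖ ^ 2 + ∑ j ∈ {i0}ᶜ, ‖(v - γ • e) j‖ ^ 2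
          ≤ γ ^ 2 * εT ^ 2 + (E + εT) ^ 2 * (1 - γ ^ 2) := by linarith
        _ ≤ (E + εT) ^ 2 := by
            have h5 : εT ^ 2 ≤ (E + εT) ^ 2 :=
              pow_le_pow_left₀ hεT0 (by linarith) 2
            nlinarith [mul_le_mul_of_nonneg_left h5 (sq_nonneg γ)]
    have hnn : 0 ≤ E + εT := by linarith
    rw [EuclideanSpace.norm_eq]
    calc Real.sqrt (∑ j, ‖(v - γ • e) j‖ ^ 2) ≤ Real.sqrt ((E + εT) ^ 2) :=
          Real.sqrt_le_sqrt hsq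
      _ = E + εT := Real.sqrt_sq hnn
  -- apply the lemma
  have hsmul : ((‖v‖ : ℂ))⁻¹ • v = (‖v‖)⁻¹ • v := by
    rw [← Complex.ofReal_inv, Complex.coe_smul]
  rw [hsmul]
  calc ‖e - ‖v‖⁻¹ • v‖ ≤ 2 * ‖v - γ • e‖ / γ :=
        normalize_dist e v hnorm_e γ hγ hvne
    _ ≤ 2 * (E + εT) / γ := by
        apply div_le_div_of_nonneg_right _ hγ.le
        linarith [hkey]
    _ = 2 * E / γ + 2 * εT / γ := by field_simp
end

section
/- For parameters β ∈ ℝ and λ ∈ (0,1), define g(a) = ∫_0^λ e^{−2ax²−βx} dx and h(a) = ∫_λ^1 e^{−2ax²−βx} dx for a > 0. Then the function a ↦ g(a)/(g(a) + h(a)) is monotone increasing on (0, ∞): for all 0 < a ≤ a′, g(a)/(g(a)+h(a)) ≤ g(a′)/(g(a′)+h(a′)). -/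
/-!
Writing `f_a(x) = e^{-2ax²-βx}`, the integrand for `a' ≥ a` is `f_{a'} = k f_a` with the
weight `k(x) = e^{-2(a'-a)x²}`, which is antitone on `[0, 1]`. Tilting by an antitone weight
moves mass to the left of any cut point `λ`: `k ≥ k(λ)` on `[0, λ]` and `k ≤ k(λ)` on `[λ, 1]`,
hence `g(a) h(a') ≤ k(λ) g(a) h(a) ≤ g(a') h(a)`, which is the claimed inequality of ratios.
-/

open Real Set MeasureTheory intervalIntegral

theorem div_add_le_div_add_of_mul_le_mul {G H G' H' : ℝ} (hGH : 0 < G + H) (hGH' : 0 < G' + H')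
    (h : G * H' ≤ G' * H) : G / (G + H) ≤ G' / (G' + H') := by
  rw [div_le_div_iff₀ hGH hGH']
  linarith

theorem integral_mul_integral_antitone_weight_le {f k : ℝ → ℝ} {u v w : ℝ} (huv : u ≤ v)
    (hvw : v ≤ w) (hf : ∀ x ∈ Icc u w, 0 ≤ f x) (hk : AntitoneOn k (Icc u w))
    (hfi : IntervalIntegrable f volume u w)
    (hkfi : IntervalIntegrable (fun x => k x * f x) volume u w) :
    (∫ x in u..v, f x) * ∫ x in v..w, k x * f x ≤
      (∫ x in u..v, k x * f x) * ∫ x in v..w, f x := by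
  have hleft : Icc u v ⊆ Icc u w := Icc_subset_Icc_right hvw
  have hright : Icc v w ⊆ Icc u w := Icc_subset_Icc_left huv
  have hv : v ∈ Icc u w := ⟨huv, hvw⟩
  have hint {g : ℝ → ℝ} (hg : IntervalIntegrable g volume u w) {s t : ℝ}
      (hst : Icc s t ⊆ Icc u w) (hst' : s ≤ t) : IntervalIntegrable g volume s t :=
    hg.mono_set (by simpa [uIcc_of_le hst', uIcc_of_le (huv.trans hvw)] using hst)
  have hG : 0 ≤ ∫ x in u..v, f x := integral_nonneg huv fun x hx => hf x (hleft hx)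
  have hH : 0 ≤ ∫ x in v..w, f x := integral_nonneg hvw fun x hx => hf x (hright hx)
  have hmass_left : k v * ∫ x in u..v, f x ≤ ∫ x in u..v, k x * f x := by
    rw [← intervalIntegral.integral_const_mul]
    refine integral_mono_on huv ((hint hfi hleft huv).const_mul _) (hint hkfi hleft huv)
      fun x hx => mul_le_mul_of_nonneg_right ?_ (hf x (hleft hx))
    exact hk (hleft hx) hv hx.2
  have hmass_right : ∫ x in v..w, k x * f x ≤ k v * ∫ x in v..w, f x := by
    rw [← intervalIntegral.integral_const_mul]
    refine integral_mono_on hvw (hint hkfi hright hvw) ((hint hfi hright hvw).const_mul _)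
      fun x hx => mul_le_mul_of_nonneg_right ?_ (hf x (hright hx))
    exact hk hv (hright hx) hx.1
  calc (∫ x in u..v, f x) * ∫ x in v..w, k x * f x
      ≤ (∫ x in u..v, f x) * (k v * ∫ x in v..w, f x) := mul_le_mul_of_nonneg_left hmass_right hG
    _ = (k v * ∫ x in u..v, f x) * ∫ x in v..w, f x := by ring
    _ ≤ (∫ x in u..v, k x * f x) * ∫ x in v..w, f x := mul_le_mul_of_nonneg_right hmass_left hH

theorem antitoneOn_exp_neg_mul_sq {c : ℝ} (hc : 0 ≤ c) :
    AntitoneOn (fun x : ℝ => exp (-c * x ^ 2)) (Ici 0) := by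
  intro x hx y _ hxy
  have hsq : x ^ 2 ≤ y ^ 2 := pow_le_pow_left₀ hx hxy 2
  exact exp_le_exp.mpr (by nlinarith)

theorem integral_exp_quadratic_pos (a β : ℝ) {u v : ℝ} (huv : u < v) :
    0 < ∫ x in u..v, exp (-2 * a * x ^ 2 - β * x) :=
  intervalIntegral_pos_of_pos (Continuous.intervalIntegrable (by fun_prop) u v)
    (fun _ => exp_pos _) huv

theorem stmt_19_general (β lam : ℝ) (hlam : lam ∈ Set.Ioo (0:ℝ) 1)
    (a a' : ℝ) (haa' : a ≤ a') :
    (∫ x in (0:ℝ)..lam, Real.exp (-2 * a * x ^ 2 - β * x)) /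
        ((∫ x in (0:ℝ)..lam, Real.exp (-2 * a * x ^ 2 - β * x)) +
          ∫ x in lam..1, Real.exp (-2 * a * x ^ 2 - β * x)) ≤
      (∫ x in (0:ℝ)..lam, Real.exp (-2 * a' * x ^ 2 - β * x)) /
        ((∫ x in (0:ℝ)..lam, Real.exp (-2 * a' * x ^ 2 - β * x)) +
          ∫ x in lam..1, Real.exp (-2 * a' * x ^ 2 - β * x)) := by
  obtain ⟨hl0, hl1⟩ := hlam
  refine div_add_le_div_add_of_mul_le_mul
    (add_pos (integral_exp_quadratic_pos a β hl0) (integral_exp_quadratic_pos a β hl1))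
    (add_pos (integral_exp_quadratic_pos a' β hl0) (integral_exp_quadratic_pos a' β hl1)) ?_
  have htilt : ∀ x : ℝ, exp (-2 * a' * x ^ 2 - β * x) =
      exp (-(2 * (a' - a)) * x ^ 2) * exp (-2 * a * x ^ 2 - β * x) := fun x => by
    rw [← exp_add]; ring_nf
  simp_rw [htilt]
  exact integral_mul_integral_antitone_weight_le hl0.le hl1.le (fun _ _ => (exp_pos _).le)
    ((antitoneOn_exp_neg_mul_sq (by linarith)).mono Icc_subset_Ici_self)
    (Continuous.intervalIntegrable (by fun_prop) _ _)
    (Continuous.intervalIntegrable (by fun_prop) _ _)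

/-- Monotonicity of the boosted low-energy overlap in the Gaussian parameter `a`:
with `g(a) = ∫_0^λ e^{−2ax²−βx} dx` and `h(a) = ∫_λ^1 e^{−2ax²−βx} dx`, the map
`a ↦ g(a)/(g(a)+h(a))` is monotone increasing on `(0, ∞)`. -/
theorem stmt_19 (β lam : ℝ) (hlam : lam ∈ Set.Ioo (0:ℝ) 1)
    (a a' : ℝ) (ha : 0 < a) (haa' : a ≤ a') :
    (∫ x in (0:ℝ)..lam, Real.exp (-2 * a * x ^ 2 - β * x)) /
        ((∫ x in (0:ℝ)..lam, Real.exp (-2 * a * x ^ 2 - β * x)) +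
          ∫ x in lam..1, Real.exp (-2 * a * x ^ 2 - β * x)) ≤
      (∫ x in (0:ℝ)..lam, Real.exp (-2 * a' * x ^ 2 - β * x)) /
        ((∫ x in (0:ℝ)..lam, Real.exp (-2 * a' * x ^ 2 - β * x)) +
          ∫ x in lam..1, Real.exp (-2 * a' * x ^ 2 - β * x)) :=
  stmt_19_general β lam hlam a a' haa'
end
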